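/- arXiv:0810.5684 — 2 statements merged into one kernel-verified Lean document; each statement's English description precedes it below -/
import Mathlib

section
/- Let B be an additive category with splitting idempotents and let Y be a chain complex over B. Then Y is contractible (i.e., becomes a zero object in the homotopy category K(B)) if and only if Y is isomorphic in the category of complexes C(B) to a complex of the form ∐_{n∈ℤ} I_{X_n,n}, where I_{X,n} denotes the complex ⋯→0→X =→ X→0→⋯ with the two copies of X in degrees n and n+1 and the identity as differential between them. -/
/-!
Statement 1: Let `B` be an additive category with splitting idempotents and `Y` a (cochain)
complex over `B`. Then `Y` is contractible (i.e. becomes a zero object in the homotopy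
category `K(B)`) if and only if `Y` is isomorphic in the category of complexes `C(B)` to a
complex of the form `∐_{n ∈ ℤ} I_{X_n, n}`, where `I_{X,n}` is the complex with `X` in
degrees `n` and `n+1`, the identity as the differential between them, and `0` elsewhere.
(The coproduct is expressed by a colimit cofan over the family `n ↦ I_{X_n, n}`.)
-/

open CategoryTheory CategoryTheory.Limits ZeroObject

universe v u

variable {B : Type u} [Category.{v} B] [Preadditive B] [HasZeroObject B]
  [HasBinaryBiproducts B]

/-- The contractible complex `I_{X,n}`: `⋯ → 0 → X = X → 0 → ⋯` with the two copies of `X`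
placed in degrees `n` and `n+1`. -/
noncomputable def doubleComplex (A : B) (n : ℤ) : CochainComplex B ℤ where
  X i := if i = n ∨ i = n + 1 then A else 0
  d i j :=
    if h : i = n ∧ j = n + 1 then
      eqToHom (if_pos (Or.inl h.1)) ≫ eqToHom (if_pos (Or.inr h.2)).symm
    else 0
  shape i j hij := by
    try dsimp only
    rw [dif_neg]
    rintro ⟨rfl, rfl⟩
    exact hij rfl
  d_comp_d' i j k _ _ := by
    try dsimp only
    by_cases h : i = n ∧ j = n + 1
    · rw [dif_neg (show ¬(j = n ∧ k = n + 1) by rintro ⟨rfl, -⟩; omega), comp_zero]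
    · rw [dif_neg h, zero_comp]


/-!
If `h` contracts `Y`, i.e. `h d + d h = 𝟙`, then `e = d h` is an idempotent on every `Y.X i`.
Splitting it off as `S i`, the maps `S i → Y.X i` and `S (i - 1) → Y.X (i - 1) → Y.X i` (the
latter followed by `d`) identify `Y.X i` with `S i ⊞ S (i - 1)`, and hence `Y` with
`∐ₙ I_{S n, n}`, whose degree `i` part is exactly `S i ⊞ S (i - 1)`. Conversely that coproduct
is contracted by the map moving the second summand in degree `i` to the first one in degree
`i - 1`. The universal property of the coproduct holds because `I_{A,n}` corepresents
`K ↦ (A ⟶ K.X n)`.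
-/

namespace doubleComplex

omit [HasBinaryBiproducts B]

variable (A : B) (n : ℤ)

lemma X_self : (doubleComplex A n).X n = A := if_pos (Or.inl rfl)

lemma X_succ : (doubleComplex A n).X (n + 1) = A := if_pos (Or.inr rfl)

lemma d_self :
    (doubleComplex A n).d n (n + 1) = eqToHom (X_self A n) ≫ eqToHom (X_succ A n).symm :=
  dif_pos ⟨rfl, rfl⟩

lemma d_eq_zero {i j : ℤ} (h : i ≠ n) : (doubleComplex A n).d i j = 0 :=
  dif_neg fun h' => h h'.1

noncomputable def isoDouble : doubleComplex A n ≅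
    HomologicalComplex.double (𝟙 A) (show (ComplexShape.up ℤ).Rel n (n + 1) by simp) :=
  HomologicalComplex.Hom.isoOfComponents
    (fun k => eqToIso (by
      dsimp [doubleComplex, HomologicalComplex.double]
      split_ifs <;> first | rfl | omega))
    (fun k k' hkk' => by
      by_cases h : k = n
      · subst h
        obtain rfl : k' = k + 1 := hkk'.symm
        simp only [d_self, HomologicalComplex.double_d _ _ (show k ≠ k + 1 by omega),
          HomologicalComplex.doubleXIso₀, HomologicalComplex.doubleXIso₁, eqToIso.hom,
          eqToIso.inv, Category.id_comp, eqToHom_comp_iff, comp_eqToHom_iff, eqToHom_trans]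
        rfl
      · simp [d_eq_zero _ _ h, HomologicalComplex.double_d_eq_zero₀ _ _ _ _ h])

variable {A n} {K L : CochainComplex B ℤ}

noncomputable def homEquiv : (doubleComplex A n ⟶ K) ≃ (A ⟶ K.X n) :=
  ((HomologicalComplex.evalCompCoyonedaCorepresentableByDoubleId _ (by omega) A).ofIsoObj
    (isoDouble A n)).homEquiv

lemma homEquiv_comp (f : doubleComplex A n ⟶ K) (g : K ⟶ L) :
    homEquiv (f ≫ g) = homEquiv f ≫ g.f n :=
  Functor.CorepresentableBy.homEquiv_comp _ g f

end doubleComplex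

section CoproductOfDoubles

variable {C : Type*} [Category C] [Preadditive C] [HasBinaryBiproducts C]

/-- The coproduct `∐ₙ I_{X n, n}` computed degreewise: degree `i` holds the copy of `X i` that
starts there and the copy of `X (i - 1)` that ends there. -/
noncomputable abbrev coproductOfDoubles (X : ℤ → C) : CochainComplex C ℤ where
  X i := X i ⊞ X (i - 1)
  d i j :=
    if h : i + 1 = j then biprod.fst ≫ eqToHom (congrArg X (by omega)) ≫ biprod.inr else 0
  shape i j hij := dif_neg hij
  d_comp_d' i j k hij hjk := by
    rw [dif_pos (show i + 1 = j from hij), dif_pos (show j + 1 = k from hjk)]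
    simp

namespace coproductOfDoubles

variable (X : ℤ → C)

lemma d_eq {i j : ℤ} (h : i + 1 = j) :
    (coproductOfDoubles X).d i j =
      biprod.fst ≫ eqToHom (congrArg X (by omega : i = j - 1)) ≫ biprod.inr :=
  dif_pos h

lemma inl_d {i j : ℤ} (h : i + 1 = j) :
    biprod.inl ≫ (coproductOfDoubles X).d i j =
      eqToHom (congrArg X (by omega : i = j - 1)) ≫ biprod.inr := by
  rw [d_eq X h, biprod.inl_fst_assoc]

noncomputable def homotopyZero : Homotopy (𝟙 (coproductOfDoubles X)) 0 where
  hom i j :=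
    if h : j + 1 = i then biprod.snd ≫ eqToHom (congrArg X (by omega : i - 1 = j)) ≫ biprod.inl
    else 0
  zero i j h := dif_neg h
  comm i := by
    rw [dNext_eq _ (show (ComplexShape.up ℤ).Rel i (i + 1) by simp),
      prevD_eq _ (show (ComplexShape.up ℤ).Rel (i - 1) i by simp),
      d_eq X rfl, d_eq X (by omega), dif_pos rfl, dif_pos (by omega)]
    simp

variable {X} {K : CochainComplex C ℤ}

noncomputable def desc (g : ∀ n, X n ⟶ K.X n) : coproductOfDoubles X ⟶ K where
  f i := biprod.desc (g i) (g (i - 1) ≫ K.d (i - 1) i)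
  comm' i j hij := by
    have transport : ∀ {a b : ℤ} (hab : a = b),
        eqToHom (congrArg X hab) ≫ g b ≫ K.d b j = g a ≫ K.d a j := by
      rintro a b rfl
      simp
    obtain rfl : j = i + 1 := hij.symm
    rw [d_eq X rfl]
    apply biprod.hom_ext'
    · simpa using (transport (show i = i + 1 - 1 by omega)).symm
    · simp

lemma hom_ext {φ φ' : coproductOfDoubles X ⟶ K}
    (h : ∀ i, biprod.inl ≫ φ.f i = biprod.inl ≫ φ'.f i) : φ = φ' := by
  ext i
  · exact h i
  have inr_eq : (biprod.inr : X (i - 1) ⟶ (coproductOfDoubles X).X i) =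
      eqToHom (congrArg X (by omega)) ≫ biprod.inl ≫ (coproductOfDoubles X).d (i - 1) i := by
    rw [inl_d X (show i - 1 + 1 = i by omega), eqToHom_trans_assoc, eqToHom_refl,
      Category.id_comp]
  rw [inr_eq]
  simp only [Category.assoc]
  rw [← φ.comm, ← φ'.comm, reassoc_of% (h (i - 1))]

end coproductOfDoubles

end CoproductOfDoubles

namespace coproductOfDoubles

variable (X : ℤ → B)

noncomputable def ι (n : ℤ) : doubleComplex (X n) n ⟶ coproductOfDoubles X :=
  doubleComplex.homEquiv.symm biprod.inl

lemma homEquiv_ι (n : ℤ) : doubleComplex.homEquiv (ι X n) = biprod.inl :=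
  doubleComplex.homEquiv.apply_symm_apply _

noncomputable def cofan : Cofan fun n => doubleComplex (X n) n :=
  Cofan.mk (coproductOfDoubles X) (ι X)

noncomputable def isColimitCofan : IsColimit (cofan X) :=
  Cofan.IsColimit.mk _ (fun t => desc fun n => doubleComplex.homEquiv (t.inj n))
    (fun t n => doubleComplex.homEquiv.injective (by
      change doubleComplex.homEquiv (ι X n ≫ _) = _
      rw [doubleComplex.homEquiv_comp, homEquiv_ι]
      simp [desc]))
    (fun t m hm => hom_ext fun i => by
      change coproductOfDoubles X ⟶ t.pt at m
      rw [← homEquiv_ι, ← doubleComplex.homEquiv_comp, show ι X i ≫ m = t.inj i from hm i,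
        homEquiv_ι]
      simp [desc])

end coproductOfDoubles

namespace Homotopy

variable {C : Type*} [Category C] [Preadditive C] {Y : CochainComplex C ℤ}

section

variable (h : Homotopy (𝟙 Y) 0)

noncomputable def dCompHom (i : ℤ) : Y.X i ⟶ Y.X i := Y.d i (i + 1) ≫ h.hom (i + 1) i

lemma hom_comp_d_add_dCompHom {i j : ℤ} (hij : i + 1 = j) :
    h.hom j i ≫ Y.d i j + h.dCompHom j = 𝟙 _ := by
  have := h.comm j
  rw [dNext_eq _ (show (ComplexShape.up ℤ).Rel j (j + 1) by simp),
    prevD_eq _ (show (ComplexShape.up ℤ).Rel i j from hij)] at this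
  simpa [dCompHom, add_comm] using this.symm

lemma d_comp_dCompHom (i j : ℤ) : Y.d i j ≫ h.dCompHom j = 0 := by
  simp [dCompHom]

lemma dCompHom_comp_d {i j : ℤ} (hij : i + 1 = j) : h.dCompHom i ≫ Y.d i j = Y.d i j := by
  subst hij
  rw [dCompHom, Category.assoc, ← add_sub_cancel_right (h.hom _ _ ≫ _) (h.dCompHom (i + 1)),
    h.hom_comp_d_add_dCompHom rfl, Preadditive.comp_sub, d_comp_dCompHom, sub_zero,
    Category.comp_id]

lemma dCompHom_idem (i : ℤ) : h.dCompHom i ≫ h.dCompHom i = h.dCompHom i := by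
  nth_rw 2 [dCompHom]
  rw [← Category.assoc, h.dCompHom_comp_d rfl]
  rfl

/-- `(𝟙 - d h) h = h d h`; unlike `h` it vanishes on the image of `d h`. -/
noncomputable def normalizedHom (i j : ℤ) : Y.X i ⟶ Y.X j := (𝟙 _ - h.dCompHom i) ≫ h.hom i j

lemma dCompHom_comp_normalizedHom (i j : ℤ) : h.dCompHom i ≫ h.normalizedHom i j = 0 := by
  rw [normalizedHom, ← Category.assoc, Preadditive.comp_sub, Category.comp_id, dCompHom_idem,
    sub_self, zero_comp]

lemma d_comp_normalizedHom {i j : ℤ} (hij : i + 1 = j) :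
    Y.d i j ≫ h.normalizedHom j i = h.dCompHom i := by
  subst hij
  simp [normalizedHom, dCompHom]

lemma normalizedHom_comp_d {i j : ℤ} (hij : i + 1 = j) :
    h.normalizedHom j i ≫ Y.d i j = 𝟙 _ - h.dCompHom j := by
  rw [normalizedHom, Category.assoc, ← add_sub_cancel_right (h.hom _ _ ≫ _) (h.dCompHom j),
    h.hom_comp_d_add_dCompHom hij]
  simp [Preadditive.sub_comp, dCompHom_idem]

lemma isIso_desc_of_splitting [HasBinaryBiproducts C] {S : ℤ → C} {σ : ∀ i, S i ⟶ Y.X i} {ρ : ∀ i, Y.X i ⟶ S i}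
    (hσρ : ∀ i, σ i ≫ ρ i = 𝟙 _) (hρσ : ∀ i, ρ i ≫ σ i = h.dCompHom i) :
    IsIso (coproductOfDoubles.desc σ) := by
  have σ_e (i : ℤ) : σ i ≫ h.dCompHom i = σ i := by rw [← hρσ, reassoc_of% hσρ]
  have e_ρ (i : ℤ) : h.dCompHom i ≫ ρ i = ρ i := by rw [← hρσ, Category.assoc, hσρ, Category.comp_id]
  have hi (i : ℤ) : i - 1 + 1 = i := by omega
  have (i : ℤ) : IsIso ((coproductOfDoubles.desc σ).f i) := by
    refine ⟨biprod.lift (ρ i) (h.normalizedHom i (i - 1) ≫ ρ (i - 1)), ?_, ?_⟩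
    · apply biprod.hom_ext' <;> apply biprod.hom_ext
      · simp [coproductOfDoubles.desc, hσρ]
      · simp only [coproductOfDoubles.desc, biprod.inl_desc_assoc, Category.assoc, biprod.lift_snd,
          Category.comp_id, BinaryBicone.inl_snd]
        rw [← σ_e, Category.assoc, reassoc_of% (h.dCompHom_comp_normalizedHom i (i - 1)),
          zero_comp, comp_zero]
      · simp only [coproductOfDoubles.desc, biprod.inr_desc_assoc, Category.assoc, biprod.lift_fst,
          Category.comp_id, BinaryBicone.inr_fst]
        rw [← e_ρ, ← Category.assoc (Y.d _ _), h.d_comp_dCompHom, zero_comp, comp_zero]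
      · simp only [coproductOfDoubles.desc, biprod.inr_desc_assoc, Category.assoc, biprod.lift_snd,
          Category.comp_id, BinaryBicone.inr_snd]
        rw [reassoc_of% (h.d_comp_normalizedHom (hi i)), e_ρ, hσρ]
    · simp [coproductOfDoubles.desc, hρσ, reassoc_of% hρσ, h.dCompHom_comp_d (hi i),
        h.normalizedHom_comp_d (hi i)]
  exact HomologicalComplex.Hom.isIso_of_components _

end

lemma exists_iso_coproductOfDoubles [HasBinaryBiproducts C] [IsIdempotentComplete C]
    (h : Homotopy (𝟙 Y) 0) :
    ∃ S : ℤ → C, Nonempty (coproductOfDoubles S ≅ Y) := by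
  choose S σ ρ hσρ hρσ using fun i =>
    IsIdempotentComplete.idempotents_split _ _ (h.dCompHom_idem i)
  have := h.isIso_desc_of_splitting hσρ hρσ
  exact ⟨S, ⟨asIso (coproductOfDoubles.desc σ)⟩⟩

end Homotopy

theorem contractible_iff_iso_coproduct_of_doubles [IsIdempotentComplete B]
    (Y : CochainComplex B ℤ) :
    Limits.IsZero ((HomotopyCategory.quotient B (ComplexShape.up ℤ)).obj Y) ↔
      ∃ (X : ℤ → B) (c : Cofan fun n : ℤ => doubleComplex (X n) n) (_ : IsColimit c),
        Nonempty (Y ≅ c.pt) := by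
  constructor
  · intro hY
    obtain ⟨h⟩ := (HomotopyCategory.isZero_quotient_obj_iff Y).1 hY
    obtain ⟨X, ⟨e⟩⟩ := h.exists_iso_coproductOfDoubles
    exact ⟨X, _, coproductOfDoubles.isColimitCofan X, ⟨e.symm⟩⟩
  · rintro ⟨X, c, hc, ⟨e⟩⟩
    have hX := (HomotopyCategory.isZero_quotient_obj_iff _).2 ⟨coproductOfDoubles.homotopyZero X⟩
    exact hX.of_iso ((HomotopyCategory.quotient B _).mapIso
      (e ≪≫ hc.coconePointUniqueUpToIso (coproductOfDoubles.isColimitCofan X)))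
end

section
/- Let κ be an uncountable regular cardinal and B an additive category with κ-coproducts (coproducts with fewer than κ summands). If the homotopy category K(B) is generated as a κ-localizing subcategory of itself by a set S of fewer than κ objects, then there is an object X ∈ B such that every object of B is a direct summand of a κ-coproduct of copies of X. -/
/-!
Let `X` be the coproduct of all components of the generating complexes; there are fewer than `κ`
of them since `κ` is uncountable. The direct summands in `K(B)` of complexes whose components all
lie in `Add_κ X` form a `κ`-localizing subcategory: `Add_κ X` is closed under biproducts and, by
regularity of `κ`, under `κ`-coproducts, which takes care of mapping cones and coproducts. It
contains the generators, hence is all of `K(B)`. Finally, if the stalk complex `Y[0]` is a summand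
of `N` in `K(B)`, then `Y` is a summand of `N⁰`, since a homotopy out of or into a stalk complex
vanishes in its degree.
-/


namespace LocWellGen

open CategoryTheory CategoryTheory.Limits CategoryTheory.Pretriangulated ZeroObject

universe v u

variable (T : Type u) [Category.{v} T] [HasZeroObject T] [HasShift T ℤ]
  [Preadditive T] [∀ n : ℤ, (shiftFunctor T n).Additive] [Pretriangulated T]

/-- A localizing subcategory of a pretriangulated category, given as a class of objects:
a full triangulated subcategory closed under isomorphisms and (existing) coproducts. -/
structure IsLocalizing (L : Set T) : Prop where
  zero : (0 : T) ∈ L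
  isoClosed : ∀ {X Y : T}, (X ≅ Y) → X ∈ L → Y ∈ L
  shiftClosed : ∀ (X : T) (n : ℤ), X ∈ L → X⟦n⟧ ∈ L
  ext₂ : ∀ D ∈ distTriang T, D.obj₁ ∈ L → D.obj₃ ∈ L → D.obj₂ ∈ L
  coproductClosed : ∀ {I : Type v} (X : I → T), (∀ i, X i ∈ L) →
    ∀ (c : Cofan X), IsColimit c → c.pt ∈ L

/-- `Loc S` : the smallest localizing subcategory containing `S`. -/
def Loc (S : Set T) : Set T := ⋂₀ {L : Set T | IsLocalizing T L ∧ S ⊆ L}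

/-- `Y` is `κ`-small: any morphism from `Y` to a coproduct (of objects of `L`) factors
through a subcoproduct with fewer than `κ` summands. -/
def IsKappaSmall (L : Set T) (κ : Cardinal.{v}) (Y : T) : Prop :=
  ∀ {I : Type v} (X : I → T), (∀ i, X i ∈ L) →
    ∀ (c : Cofan X), IsColimit c → ∀ f : Y ⟶ c.pt,
      ∃ (J : Set I) (c' : Cofan fun j : J => X j) (hc' : IsColimit c') (g : Y ⟶ c'.pt),
        Cardinal.mk J < κ ∧
        f = g ≫ hc'.desc (Cofan.mk c.pt fun j : J => c.inj j.1)

/-- Condition (3) of well generation: every morphism from `Y` to a coproduct of a family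
in `L` factors through a coproduct of objects of `S` via a coproduct of morphisms. -/
def FactorsThroughFamily (L S : Set T) (Y : T) : Prop :=
  ∀ {I : Type v} (X : I → T), (∀ i, X i ∈ L) →
    ∀ (c : Cofan X), IsColimit c → ∀ f : Y ⟶ c.pt,
      ∃ (Z : I → T) (_ : ∀ i, Z i ∈ S) (φ : ∀ i, Z i ⟶ X i)
        (cz : Cofan Z) (hcz : IsColimit cz) (g : Y ⟶ cz.pt),
        f = g ≫ hcz.desc (Cofan.mk c.pt fun i => φ i ≫ c.inj i)

/-- The set `S` witnesses that the (localizing sub)category `L` is `κ`-well generated. -/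
structure GeneratesWell (L : Set T) (κ : Cardinal.{v}) (S : Set T) : Prop where
  subset : S ⊆ L
  isSmall : Small.{v} ↥S
  nondegenerate : ∀ X ∈ L, (∀ Y ∈ S, ∀ f : Y ⟶ X, f = 0) → IsZero X
  kappaSmall : ∀ Y ∈ S, IsKappaSmall T L κ Y
  factors : ∀ Y ∈ S, FactorsThroughFamily T L S Y

/-- `L` is a `κ`-well generated (localizing sub)category. -/
def IsWellGeneratedOfCard (L : Set T) (κ : Cardinal.{v}) : Prop :=
  κ.IsRegular ∧ ∃ S : Set T, GeneratesWell T L κ S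

/-- `L` is a well generated (localizing sub)category. -/
def IsWellGeneratedSubcat (L : Set T) : Prop :=
  ∃ κ : Cardinal.{v}, IsWellGeneratedOfCard T L κ

/-- compactly generated = `ℵ₀`-well generated -/
def IsCompactlyGeneratedSubcat (L : Set T) : Prop :=
  IsWellGeneratedOfCard T L Cardinal.aleph0

/-- The whole category `T` is well generated. -/
abbrev IsWellGenerated : Prop := IsWellGeneratedSubcat T Set.univ

/-- A localizing subcategory `L` is locally well generated if the localizing subcategory
generated by any set of its objects is well generated. -/
def IsLocallyWellGeneratedSubcat (L : Set T) : Prop :=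
  ∀ S : Set T, S ⊆ L → Small.{v} ↥S → IsWellGeneratedSubcat T (Loc T S)

/-- `T` is locally well generated. -/
abbrev IsLocallyWellGenerated : Prop := IsLocallyWellGeneratedSubcat T Set.univ

/-- `Y` is a retract (direct summand) of `X`. -/
def IsRetractOf {B : Type*} [Category B] (Y X : B) : Prop :=
  ∃ (s : Y ⟶ X) (r : X ⟶ Y), s ≫ r = 𝟙 Y

end LocWellGen

namespace LocWellGen

open CategoryTheory CategoryTheory.Limits

universe v u
/-- An additive category with arbitrary coproducts is pure semisimple if it has an
additive generator: `B = Add X` for some `X`, i.e. every object is a direct summand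
of a coproduct of copies of `X`. -/
def IsPureSemisimple (B : Type u) [Category.{v} B] : Prop :=
  ∃ X : B, ∀ Y : B, ∃ (I : Type v) (c : Cofan fun _ : I => X) (_ : IsColimit c),
    IsRetractOf Y c.pt

end LocWellGen

namespace LocWellGen

open CategoryTheory CategoryTheory.Limits CategoryTheory.Pretriangulated ZeroObject

universe v u

variable (T : Type u) [Category.{v} T] [HasZeroObject T] [HasShift T ℤ]
  [Preadditive T] [∀ n : ℤ, (shiftFunctor T n).Additive] [Pretriangulated T]

/-- A `κ`-localizing subcategory: a thick subcategory closed under `κ`-coproducts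
(coproducts with fewer than `κ` summands). -/
structure IsKappaLocalizing (κ : Cardinal.{v}) (L : Set T) : Prop where
  zero : (0 : T) ∈ L
  isoClosed : ∀ {X Y : T}, (X ≅ Y) → X ∈ L → Y ∈ L
  summandClosed : ∀ {X Y : T}, IsRetractOf Y X → X ∈ L → Y ∈ L
  shiftClosed : ∀ (X : T) (n : ℤ), X ∈ L → X⟦n⟧ ∈ L
  ext₂ : ∀ D ∈ distTriang T, D.obj₁ ∈ L → D.obj₃ ∈ L → D.obj₂ ∈ L
  coproductClosed : ∀ {I : Type v} (X : I → T), Cardinal.mk I < κ → (∀ i, X i ∈ L) →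
    ∀ (c : Cofan X), IsColimit c → c.pt ∈ L

/-- The smallest `κ`-localizing subcategory containing `S`. -/
def KLoc (κ : Cardinal.{v}) (S : Set T) : Set T :=
  ⋂₀ {L : Set T | IsKappaLocalizing T κ L ∧ S ⊆ L}

section Retracts

variable {C : Type*} [Category C]

lemma IsRetractOf.of_retract {X Y : C} (h : Retract X Y) : IsRetractOf X Y :=
  ⟨h.i, h.r, h.retract⟩

lemma IsRetractOf.nonempty {X Y : C} (h : IsRetractOf X Y) : Nonempty (Retract X Y) :=
  let ⟨i, r, hir⟩ := h
  ⟨⟨i, r, hir⟩⟩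

/-- The cocone `d` need not be a colimit: this is what lets the argument run in `K(B)`, where
coproducts of complexes are not known to give coproducts. -/
def retractOfIsColimit {I : Type*} {F G : Discrete I ⥤ C} {c : Cocone F} (hc : IsColimit c)
    (d : Cocone G) (h : ∀ i, Retract (F.obj i) (G.obj i)) (ρ : d.pt ⟶ c.pt)
    (hρ : ∀ i, d.ι.app i ≫ ρ = (h i).r ≫ c.ι.app i) : Retract c.pt d.pt where
  i := hc.desc ⟨d.pt, Discrete.natTrans fun i => (h i).i ≫ d.ι.app i⟩
  r := ρ
  retract := hc.hom_ext fun i => by simp [hρ]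

end Retracts

section Pretriangulated

open Pretriangulated

variable {C : Type*} [Category C] [HasZeroObject C] [HasShift C ℤ] [Preadditive C]
  [∀ n : ℤ, (shiftFunctor C n).Additive] [Pretriangulated C]

/-- Comparing the two triangles in both directions gives an endomorphism of `T` that is the
identity on the first two objects, hence an isomorphism on the third. -/
lemma nonempty_retract_obj₃ {T T' : Triangle C} (hT : T ∈ distTriang C)
    (hT' : T' ∈ distTriang C) (h₁ : Retract T.obj₁ T'.obj₁) (h₂ : Retract T.obj₂ T'.obj₂)
    (hmor₁ : T'.mor₁ = h₁.r ≫ T.mor₁ ≫ h₂.i) : Nonempty (Retract T.obj₃ T'.obj₃) := by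
  obtain ⟨a, ha₂, ha₃⟩ :=
    complete_distinguished_triangle_morphism T T' hT hT' h₁.i h₂.i (by simp [hmor₁])
  obtain ⟨b, hb₂, hb₃⟩ :=
    complete_distinguished_triangle_morphism T' T hT' hT h₁.r h₂.r (by simp [hmor₁])
  let φ : T ⟶ T := Triangle.homMk _ _ (𝟙 _) (𝟙 _) (a ≫ b) (by simp)
    (by rw [reassoc_of% ha₂, hb₂, Retract.retract_assoc, Category.id_comp])
    (by rw [Category.assoc, ← hb₃, ← reassoc_of% ha₃, ← Functor.map_comp, Retract.retract])
  have : IsIso (a ≫ b) :=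
    isIso₃_of_isIso₁₂ φ hT hT (inferInstanceAs (IsIso (𝟙 _))) (inferInstanceAs (IsIso (𝟙 _)))
  exact ⟨⟨a, b ≫ inv (a ≫ b), by rw [← Category.assoc, IsIso.hom_inv_id]⟩⟩

end Pretriangulated

section KappaAdd

variable {B : Type u} [Category.{v} B]

/-- `Add_κ X`. -/
def kappaAdd (κ : Cardinal.{v}) (X : B) : Set B :=
  {Y | ∃ (I : Type v) (_ : Cardinal.mk I < κ) (c : Cofan fun _ : I => X) (_ : IsColimit c),
    IsRetractOf Y c.pt}

variable {κ : Cardinal.{v}} {X : B}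

lemma mem_kappaAdd_of_retract {Y Z : B} (h : Retract Y Z) (hZ : Z ∈ kappaAdd κ X) :
    Y ∈ kappaAdd κ X := by
  obtain ⟨I, hI, c, hc, hZ⟩ := hZ
  obtain ⟨r⟩ := hZ.nonempty
  exact ⟨I, hI, c, hc, .of_retract (h.trans r)⟩

lemma mem_kappaAdd_of_retract_sigma {I : Type v} (hI : Cardinal.mk I < κ)
    [HasCoproduct fun _ : I => X] {Y : B} (h : Retract Y (∐ fun _ : I => X)) :
    Y ∈ kappaAdd κ X :=
  ⟨I, hI, _, colimit.isColimit _, .of_retract h⟩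

lemma self_mem_kappaAdd (hκ : Cardinal.aleph0 ≤ κ)
    (hB : ∀ I : Type v, Cardinal.mk I < κ → HasColimitsOfShape (Discrete I) B) :
    X ∈ kappaAdd κ X :=
  have hI : Cardinal.mk PUnit.{v + 1} < κ := (Cardinal.lt_aleph0_of_finite _).trans_le hκ
  have := hB _ hI
  mem_kappaAdd_of_retract_sigma hI
    ⟨Sigma.ι (fun _ : PUnit.{v + 1} => X) PUnit.unit, Limits.Sigma.desc fun _ => 𝟙 X, by simp⟩

lemma mem_kappaAdd_of_isZero [HasZeroMorphisms B] (hκ : Cardinal.aleph0 ≤ κ)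
    (hB : ∀ I : Type v, Cardinal.mk I < κ → HasColimitsOfShape (Discrete I) B)
    {Z : B} (hZ : IsZero Z) : Z ∈ kappaAdd κ X :=
  mem_kappaAdd_of_retract ⟨0, 0, hZ.eq_of_src _ _⟩ (self_mem_kappaAdd hκ hB)

/-- A `κ`-coproduct of `κ`-coproducts of copies of `X` is a coproduct of copies of `X` indexed
by a sigma type, which is still of size `< κ` by regularity. -/
lemma colimit_mem_kappaAdd (hreg : κ.IsRegular)
    (hB : ∀ I : Type v, Cardinal.mk I < κ → HasColimitsOfShape (Discrete I) B)
    {I : Type v} (hI : Cardinal.mk I < κ) (F : Discrete I ⥤ B) [HasColimit F]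
    (hF : ∀ i, F.obj i ∈ kappaAdd κ X) : colimit F ∈ kappaAdd κ X := by
  choose J hJ c hc hFc using fun i : I => hF ⟨i⟩
  have r := fun i => (hFc i).nonempty.some
  have hcard : Cardinal.mk (Σ i, J i) < κ := by
    rw [Cardinal.mk_sigma]
    exact Cardinal.sum_lt_of_isRegular hreg hI hJ
  have := hB _ hcard
  refine mem_kappaAdd_of_retract_sigma hcard (retractOfIsColimit (colimit.isColimit F)
    (Cofan.mk _ fun i =>
      Cofan.IsColimit.desc (hc i) fun j => Sigma.ι (fun _ : Σ i, J i => X) ⟨i, j⟩)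
    (fun i => r i.as)
    (Limits.Sigma.desc fun p : Σ i, J i => (c p.1).inj p.2 ≫ (r p.1).r ≫ colimit.ι F ⟨p.1⟩)
    fun ⟨i⟩ => Cofan.IsColimit.hom_ext (hc i) _ _ fun j => ?_)
  simp

lemma biprod_mem_kappaAdd [HasZeroMorphisms B] (hreg : κ.IsRegular)
    (hB : ∀ I : Type v, Cardinal.mk I < κ → HasColimitsOfShape (Discrete I) B)
    {Y Z : B} [HasBinaryBiproduct Y Z] (hY : Y ∈ kappaAdd κ X) (hZ : Z ∈ kappaAdd κ X) :
    (Y ⊞ Z) ∈ kappaAdd κ X := by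
  let f : ULift.{v} Bool → B := fun b => cond b.down Y Z
  have hI : Cardinal.mk (ULift.{v} Bool) < κ :=
    (Cardinal.lt_aleph0_of_finite _).trans_le hreg.aleph0_le
  have := hB _ hI
  refine mem_kappaAdd_of_retract
    ⟨biprod.desc (X := Y) (Y := Z) (Sigma.ι f ⟨true⟩) (Sigma.ι f ⟨false⟩),
      Limits.Sigma.desc fun
        | ⟨true⟩ => (biprod.inl : Y ⟶ Y ⊞ Z)
        | ⟨false⟩ => (biprod.inr : Z ⟶ Y ⊞ Z),
      by ext <;> simp⟩
    (colimit_mem_kappaAdd hreg hB hI _ fun | ⟨⟨true⟩⟩ => hY | ⟨⟨false⟩⟩ => hZ)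

end KappaAdd

variable {T} in
lemma KLoc_subset {κ : Cardinal.{v}} {S L : Set T} (hL : IsKappaLocalizing T κ L)
    (hS : S ⊆ L) : KLoc T κ S ⊆ L :=
  Set.sInter_subset_of_mem ⟨hL, hS⟩

section HomotopyCategory

open HomotopyCategory

variable {B : Type u} [Category.{v} B] [Preadditive B]

def summandsOfComplexes (P : Set B) : Set (HomotopyCategory B (ComplexShape.up ℤ)) :=
  {W | ∃ N : CochainComplex B ℤ, (∀ n, N.X n ∈ P) ∧
    IsRetractOf W ((quotient B (ComplexShape.up ℤ)).obj N)}

variable {P : Set B}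

lemma quotient_obj_mem_summandsOfComplexes {N : CochainComplex B ℤ} (hN : ∀ n, N.X n ∈ P) :
    (quotient B (ComplexShape.up ℤ)).obj N ∈ summandsOfComplexes P :=
  ⟨N, hN, .of_retract (Retract.refl _)⟩

lemma mem_summandsOfComplexes_of_retract {W W' : HomotopyCategory B (ComplexShape.up ℤ)}
    (h : Retract W W') (hW' : W' ∈ summandsOfComplexes P) : W ∈ summandsOfComplexes P := by
  obtain ⟨N, hN, hW'⟩ := hW'
  obtain ⟨r⟩ := hW'.nonempty
  exact ⟨N, hN, .of_retract (h.trans r)⟩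

lemma zero_mem_summandsOfComplexes [HasZeroObject B] (hzero : ∀ Z : B, IsZero Z → Z ∈ P) :
    (0 : HomotopyCategory B (ComplexShape.up ℤ)) ∈ summandsOfComplexes P :=
  mem_summandsOfComplexes_of_retract ⟨0, 0, (isZero_zero _).eq_of_src _ _⟩
    (quotient_obj_mem_summandsOfComplexes (N := 0) fun n =>
      hzero _ ((HomologicalComplex.eval B _ n).map_isZero (isZero_zero _)))

lemma shift_mem_summandsOfComplexes {W : HomotopyCategory B (ComplexShape.up ℤ)}
    (hW : W ∈ summandsOfComplexes P) (n : ℤ) : W⟦n⟧ ∈ summandsOfComplexes P := by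
  obtain ⟨N, hN, hW⟩ := hW
  obtain ⟨r⟩ := hW.nonempty
  exact mem_summandsOfComplexes_of_retract
    ((r.map (shiftFunctor _ n)).trans
      (.ofIso (((quotient B (ComplexShape.up ℤ)).commShiftIso n).app N).symm))
    (quotient_obj_mem_summandsOfComplexes fun m => hN (m + n))

lemma obj₃_mem_summandsOfComplexes [HasZeroObject B] [HasBinaryBiproducts B]
    (hretract : ∀ {Y Z : B}, Retract Y Z → Z ∈ P → Y ∈ P)
    (hbiprod : ∀ {Y Z : B}, Y ∈ P → Z ∈ P → (Y ⊞ Z) ∈ P)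
    {D : Triangle (HomotopyCategory B (ComplexShape.up ℤ))} (hD : D ∈ distTriang _)
    (h₁ : D.obj₁ ∈ summandsOfComplexes P) (h₂ : D.obj₂ ∈ summandsOfComplexes P) :
    D.obj₃ ∈ summandsOfComplexes P := by
  obtain ⟨M₁, hM₁, h₁⟩ := h₁
  obtain ⟨M₂, hM₂, h₂⟩ := h₂
  obtain ⟨r₁⟩ := h₁.nonempty
  obtain ⟨r₂⟩ := h₂.nonempty
  obtain ⟨f, hf⟩ :=
    (quotient B (ComplexShape.up ℤ)).map_surjective (r₁.r ≫ D.mor₁ ≫ r₂.i)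
  obtain ⟨r₃⟩ := nonempty_retract_obj₃ hD (mappingCone_triangleh_distinguished f) r₁ r₂ hf
  exact ⟨CochainComplex.mappingCone f, fun n => hretract
    (.ofIso (HomologicalComplex.homotopyCofiber.XIsoBiprod f n (n + 1) (by simp)))
    (hbiprod (hM₁ (n + 1)) (hM₂ n)), .of_retract r₃⟩

lemma cofan_pt_mem_summandsOfComplexes {κ : Cardinal.{v}}
    (hretract : ∀ {Y Z : B}, Retract Y Z → Z ∈ P → Y ∈ P)
    (hcolim : ∀ {I : Type v}, Cardinal.mk I < κ → ∀ (F : Discrete I ⥤ B) [HasColimit F],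
      (∀ i, F.obj i ∈ P) → colimit F ∈ P)
    {I : Type v} (hI : Cardinal.mk I < κ) [HasColimitsOfShape (Discrete I) B]
    {W : I → HomotopyCategory B (ComplexShape.up ℤ)} (hW : ∀ i, W i ∈ summandsOfComplexes P)
    (c : Cofan W) (hc : IsColimit c) : c.pt ∈ summandsOfComplexes P := by
  choose N hN hr using hW
  have r := fun i => (hr i).nonempty.some
  choose φ hφ using fun i => (quotient B (ComplexShape.up ℤ)).map_surjective
    (X := N i) (Y := c.pt.as) ((r i).r ≫ c.inj i)
  refine ⟨∐ N, fun n => ?_, .of_retract (retractOfIsColimit hc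
    ((quotient B _).mapCocone (colimit.cocone _)) (fun i => r i.as)
    ((quotient B _).map (Limits.Sigma.desc φ)) fun ⟨i⟩ => ?_)⟩
  · exact hretract (.ofIso (preservesColimitIso (HomologicalComplex.eval B _ n) _))
      (hcolim hI _ fun i => hN i.as n)
  · exact ((quotient B _).map_comp _ _).symm.trans
      ((congrArg _ (Sigma.ι_desc φ i)).trans (hφ i))

lemma isKappaLocalizing_summandsOfComplexes [HasZeroObject B] [HasBinaryBiproducts B]
    {κ : Cardinal.{v}}
    (hB : ∀ I : Type v, Cardinal.mk I < κ → HasColimitsOfShape (Discrete I) B)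
    (hretract : ∀ {Y Z : B}, Retract Y Z → Z ∈ P → Y ∈ P)
    (hzero : ∀ Z : B, IsZero Z → Z ∈ P)
    (hbiprod : ∀ {Y Z : B}, Y ∈ P → Z ∈ P → (Y ⊞ Z) ∈ P)
    (hcolim : ∀ {I : Type v}, Cardinal.mk I < κ → ∀ (F : Discrete I ⥤ B) [HasColimit F],
      (∀ i, F.obj i ∈ P) → colimit F ∈ P) :
    IsKappaLocalizing (HomotopyCategory B (ComplexShape.up ℤ)) κ (summandsOfComplexes P) where
  zero := zero_mem_summandsOfComplexes hzero
  isoClosed e := mem_summandsOfComplexes_of_retract (.ofIso e.symm)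
  summandClosed h := mem_summandsOfComplexes_of_retract h.nonempty.some
  shiftClosed _ n hW := shift_mem_summandsOfComplexes hW n
  ext₂ D hD h₁ h₃ := obj₃_mem_summandsOfComplexes hretract hbiprod
    (inv_rot_of_distTriang D hD) (shift_mem_summandsOfComplexes h₃ (-1)) h₁
  coproductClosed _ hI hW c hc :=
    have := hB _ hI
    cofan_pt_mem_summandsOfComplexes hretract hcolim hI hW c hc

/-- The differentials of a single complex vanish, so a homotopy `σ ≫ ρ ∼ 𝟙` is an equality in
the degree of the single complex. -/
lemma nonempty_retract_X_of_retract_quotient_single [HasZeroObject B] {Y : B}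
    {N : CochainComplex B ℤ} (n : ℤ)
    (h : Retract ((quotient B (ComplexShape.up ℤ)).obj
      ((HomologicalComplex.single B (ComplexShape.up ℤ) n).obj Y))
      ((quotient B (ComplexShape.up ℤ)).obj N)) :
    Nonempty (Retract Y (N.X n)) := by
  obtain ⟨σ, hσ⟩ := (quotient B (ComplexShape.up ℤ)).map_surjective h.i
  obtain ⟨ρ, hρ⟩ := (quotient B (ComplexShape.up ℤ)).map_surjective h.r
  have hσρ := (homotopyOfEq (σ ≫ ρ) (𝟙 _) (by simp [hσ, hρ])).comm n
  rw [dNext_eq _ (show (ComplexShape.up ℤ).Rel n (n + 1) by simp),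
    prevD_eq _ (show (ComplexShape.up ℤ).Rel (n - 1) n by simp)] at hσρ
  simp only [HomologicalComplex.single_obj_d, zero_comp, comp_zero, zero_add, add_zero,
    HomologicalComplex.id_f, HomologicalComplex.comp_f] at hσρ
  exact ⟨(Retract.ofIso (HomologicalComplex.singleObjXSelf _ n Y).symm).trans
    ⟨σ.f n, ρ.f n, hσρ⟩⟩

end HomotopyCategory

/-- let `κ` be an uncountable regular cardinal and `B` an additive category
with `κ`-coproducts. If `K(B)` is generated as a `κ`-localizing subcategory of itself by a
set of fewer than `κ` objects, then there is `X ∈ B` such that every object of `B` is a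
direct summand of a `κ`-coproduct of copies of `X`. -/
theorem add_generator_of_homotopyCategory_kappa_generated
    (κ : Cardinal.{v}) (hreg : κ.IsRegular) (hunc : Cardinal.aleph0 < κ)
    (B : Type u) [Category.{v} B] [Preadditive B] [HasZeroObject B] [HasBinaryBiproducts B]
    (hB : ∀ (I : Type v), Cardinal.mk I < κ → HasColimitsOfShape (Discrete I) B)
    (ι : Type v) (g : ι → HomotopyCategory B (ComplexShape.up ℤ))
    (hcard : Cardinal.mk ι < κ)
    (hgen : KLoc (HomotopyCategory B (ComplexShape.up ℤ)) κ (Set.range g) = Set.univ) :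
    ∃ X : B, ∀ Y : B, ∃ (I : Type v) (_ : Cardinal.mk I < κ)
      (c : Cofan fun _ : I => X) (_ : IsColimit c), IsRetractOf Y c.pt := by
  let F : ι × ULift.{v} ℤ → B := fun p => (g p.1).as.X p.2.down
  have hF : Cardinal.mk (ι × ULift.{v} ℤ) < κ := by
    simpa using Cardinal.mul_lt_of_lt hunc.le hcard hunc
  have := hB _ hF
  have hL := isKappaLocalizing_summandsOfComplexes (P := kappaAdd κ (∐ F)) hB
    mem_kappaAdd_of_retract (fun _ => mem_kappaAdd_of_isZero hunc.le hB)
    (biprod_mem_kappaAdd hreg hB) (colimit_mem_kappaAdd hreg hB)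
  have hg : Set.range g ⊆ summandsOfComplexes (kappaAdd κ (∐ F)) := by
    rintro _ ⟨i, rfl⟩
    exact quotient_obj_mem_summandsOfComplexes fun n => mem_kappaAdd_of_retract
      ⟨Sigma.ι F (i, ⟨n⟩), retraction _, IsSplitMono.id _⟩ (self_mem_kappaAdd hunc.le hB)
  refine ⟨∐ F, fun Y => ?_⟩
  obtain ⟨N, hN, hY⟩ := KLoc_subset hL hg (hgen ▸ Set.mem_univ
    ((HomotopyCategory.quotient B _).obj ((HomologicalComplex.single B _ 0).obj Y)))
  obtain ⟨r⟩ := nonempty_retract_X_of_retract_quotient_single 0 hY.nonempty.some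
  exact mem_kappaAdd_of_retract r (hN 0)

end LocWellGen
end
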